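/- arXiv:2405.11267 — 7 statements merged into one kernel-verified Lean document; each statement's English description precedes it below -/
import Mathlib

section
/- For a total map f : E → E' of event structures, f is rigid (preserves causal dependency) if and only if for all configurations x of E and y of E', whenever y ⊆ f(x) there exists a configuration z of E with z ⊆ x and f(z) = y. Moreover such z is unique. -/
structure EventStructure (E : Type) where
  le : E → E → Prop
  conflict : E → E → Prop
  le_refl : ∀ e, le e e
  le_trans : ∀ {a b c}, le a b → le b c → le a c
  le_antisymm : ∀ {a b}, le a b → le b a → a = b
  finite_causes : ∀ e, {e' | le e' e}.Finite
  conflict_irrefl : ∀ e, ¬ conflict e e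
  conflict_symm : ∀ {a b}, conflict a b → conflict b a
  conflict_le : ∀ {a b c}, conflict a b → le b c → conflict a c

/-- A configuration: consistent and down-closed subset of events. -/
def IsConfig {E : Type} (ES : EventStructure E) (x : Set E) : Prop :=
  (∀ e ∈ x, ∀ e' ∈ x, ¬ ES.conflict e e') ∧
  (∀ e ∈ x, ∀ e', ES.le e' e → e' ∈ x)

/-- A total map of event structures: sends configurations to configurations
and is injective on each configuration. -/
def IsMapES {E E' : Type} (ES : EventStructure E) (ES' : EventStructure E')
    (f : E → E') : Prop :=
  (∀ x, IsConfig ES x → IsConfig ES' (f '' x)) ∧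
  (∀ x, IsConfig ES x → ∀ e ∈ x, ∀ e' ∈ x, f e = f e' → e = e')

/-- A rigid map: preserves causal dependency. -/
def RigidMap {E E' : Type} (ES : EventStructure E) (ES' : EventStructure E')
    (f : E → E') : Prop :=
  ∀ a b, ES.le a b → ES'.le (f a) (f b)

/-- An open map: rigid, with configuration-lifting of extensions. -/
def OpenMapES {E E' : Type} (ES : EventStructure E) (ES' : EventStructure E')
    (f : E → E') : Prop :=
  RigidMap ES ES' f ∧
  ∀ x y, IsConfig ES x → IsConfig ES' y → f '' x ⊆ y →
    ∃ z, IsConfig ES z ∧ x ⊆ z ∧ f '' z = y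

section

variable {E E' : Type} {ES : EventStructure E} {ES' : EventStructure E'} {f : E → E'}

theorem isConfig_setOf_le (b : E) : IsConfig ES {e | ES.le e b} :=
  ⟨fun _ he _ he' hc =>
      ES.conflict_irrefl b (ES.conflict_le (ES.conflict_symm (ES.conflict_le hc he')) he),
    fun _ he _ hle => ES.le_trans hle he⟩

theorem IsConfig.inter_setOf_le {x : Set E} (hx : IsConfig ES x) (b : E) :
    IsConfig ES (x ∩ {e | ES.le e b}) :=
  ⟨fun e he e' he' => hx.1 e he.1 e' he'.1,
    fun _ he _ hle => ⟨hx.2 _ he.1 _ hle, ES.le_trans hle he.2⟩⟩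

theorem IsConfig.preimage_inter (hr : RigidMap ES ES' f) {x : Set E} {y : Set E'}
    (hx : IsConfig ES x) (hy : IsConfig ES' y) : IsConfig ES (f ⁻¹' y ∩ x) :=
  ⟨fun e he e' he' => hx.1 e he.2 e' he'.2,
    fun _ he _ hle => ⟨hy.2 _ he.1 _ (hr _ _ hle), hx.2 _ he.2 _ hle⟩⟩

theorem IsMapES.injOn (hf : IsMapES ES ES' f) {x : Set E} (hx : IsConfig ES x) :
    Set.InjOn f x :=
  fun a ha b hb => hf.2 x hx a ha b hb

/-- Lift `f '' ↓b ∩ ↓(f b)` inside `↓b`: by injectivity the lift contains `b`, hence `a`,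
so `f a ≤ f b`. -/
theorem RigidMap.of_exists_lift (hf : IsMapES ES ES' f)
    (hlift : ∀ x y, IsConfig ES x → IsConfig ES' y → y ⊆ f '' x →
      ∃ z, IsConfig ES z ∧ z ⊆ x ∧ f '' z = y) :
    RigidMap ES ES' f := by
  intro a b hab
  set x : Set E := {e | ES.le e b}
  have hx : IsConfig ES x := isConfig_setOf_le b
  have hbx : b ∈ x := ES.le_refl b
  obtain ⟨z, hz, hzx, hfz⟩ := hlift x (f '' x ∩ {e' | ES'.le e' (f b)}) hx
    ((hf.1 x hx).inter_setOf_le (f b)) Set.inter_subset_left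
  have hfb : f b ∈ f '' z := hfz ▸ ⟨Set.mem_image_of_mem f hbx, ES'.le_refl _⟩
  obtain ⟨e, hez, hfe⟩ := hfb
  obtain rfl : e = b := hf.injOn hx (hzx hez) hbx hfe
  have hfa : f a ∈ f '' z := Set.mem_image_of_mem f (hz.2 e hez a hab)
  rw [hfz] at hfa
  exact hfa.2

end

theorem rigid_iff_restriction_lifting
    {E E' : Type} (ES : EventStructure E) (ES' : EventStructure E')
    (f : E → E') (hf : IsMapES ES ES' f) :
    RigidMap ES ES' f ↔
      ∀ x y, IsConfig ES x → IsConfig ES' y → y ⊆ f '' x →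
        ∃! z, IsConfig ES z ∧ z ⊆ x ∧ f '' z = y := by
  refine ⟨fun hr x y hx hy hyx => ?_, fun H => ?_⟩
  · refine ⟨f ⁻¹' y ∩ x, ⟨hx.preimage_inter hr hy, Set.inter_subset_right, ?_⟩, ?_⟩
    · rw [Set.image_preimage_inter, Set.inter_eq_left.2 hyx]
    · rintro z ⟨-, hzx, rfl⟩
      exact ((hf.injOn hx).preimage_image_inter hzx).symm
  · exact RigidMap.of_exists_lift hf fun x y hx hy hyx => (H x y hx hy hyx).exists
end

section
/- In a game (event structure with polarity, all polarities + or −), for configurations x, y the following are equivalent: (1) y ⊑ x in the Scott order, i.e. there exists a configuration z with y ⊇⁻ z ⊆⁺ x (all events of y \ z negative, all events of x \ z positive); (2) y⁻ ⊇ x⁻ and y⁺ ⊆ x⁺, where x⁺, x⁻ denote the positive and negative events of x respectively. Moreover, when y ⊑ x the intermediate z is unique and equals x ∩ y. -/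
/-- Positive part of a set of events, w.r.t. a polarity function (`true` = Player `+`). -/
def posPart {E : Type} (pol : E → Bool) (x : Set E) : Set E := {e ∈ x | pol e = true}

/-- Negative part of a set of events. -/
def negPart {E : Type} (pol : E → Bool) (x : Set E) : Set E := {e ∈ x | pol e = false}

theorem scott_order_characterisation
    {E : Type} (ES : EventStructure E) (pol : E → Bool)
    (x y : Set E) (hx : IsConfig ES x) (hy : IsConfig ES y) :
    ((∃ z, IsConfig ES z ∧
        z ⊆ y ∧ (∀ e ∈ y \ z, pol e = false) ∧
        z ⊆ x ∧ (∀ e ∈ x \ z, pol e = true)) ↔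
      (negPart pol x ⊆ negPart pol y ∧ posPart pol y ⊆ posPart pol x)) ∧
    (∀ z, IsConfig ES z →
        z ⊆ y → (∀ e ∈ y \ z, pol e = false) →
        z ⊆ x → (∀ e ∈ x \ z, pol e = true) →
        z = x ∩ y) := by
  constructor
  · constructor
    · rintro ⟨z, hz, hzy, hyz, hzx, hxz⟩
      constructor
      · rintro e ⟨hex, hneg⟩
        by_cases hez : e ∈ z
        · exact ⟨hzy hez, hneg⟩
        · have := hxz e ⟨hex, hez⟩; simp [this] at hneg
      · rintro e ⟨hey, hpos⟩
        by_cases hez : e ∈ z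
        · exact ⟨hzx hez, hpos⟩
        · have := hyz e ⟨hey, hez⟩; simp [this] at hpos
    · rintro ⟨hneg, hpos⟩
      refine ⟨x ∩ y, ⟨fun e he e' he' => hx.1 e he.1 e' he'.1,
        fun e he e' hle => ⟨hx.2 e he.1 e' hle, hy.2 e he.2 e' hle⟩⟩,
        fun e he => he.2, ?_, fun e he => he.1, ?_⟩
      · rintro e ⟨hey, hez⟩
        cases h : pol e with
        | true => exact absurd ((hpos (show e ∈ posPart pol y from ⟨hey, h⟩)).1) (fun hx' => hez ⟨hx', hey⟩)
        | false => rfl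
      · rintro e ⟨hex, hez⟩
        cases h : pol e with
        | false => exact absurd ((hneg (show e ∈ negPart pol x from ⟨hex, h⟩)).1) (fun hy' => hez ⟨hex, hy'⟩)
        | true => rfl
  · intro z _ hzy hyz hzx hxz
    refine Set.Subset.antisymm (fun e he => ⟨hzx he, hzy he⟩) ?_
    rintro e ⟨hex, hey⟩
    by_contra hez
    have h1 := hxz e ⟨hex, hez⟩
    have h2 := hyz e ⟨hey, hez⟩
    simp [h1] at h2
end

section
/- The Scott order on configurations of a game is a partial order: it is reflexive, transitive, and antisymmetric. -/
/-- The Scott order on configurations: `y ⊑ x` iff `y⁻ ⊇ x⁻` and `y⁺ ⊆ x⁺`. -/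
def ScottLE {E : Type} (pol : E → Bool) (y x : Set E) : Prop :=
  negPart pol x ⊆ negPart pol y ∧ posPart pol y ⊆ posPart pol x

theorem posPart_union_negPart {E : Type} (pol : E → Bool) (x : Set E) :
    posPart pol x ∪ negPart pol x = x := by
  ext e
  cases h : pol e <;> simp [_root_.posPart, _root_.negPart, h]

namespace ScottLE

variable {E : Type} {pol : E → Bool} {x y z : Set E}

theorem refl (pol : E → Bool) (x : Set E) : ScottLE pol x x :=
  ⟨subset_rfl, subset_rfl⟩

theorem trans (hzy : ScottLE pol z y) (hyx : ScottLE pol y x) : ScottLE pol z x :=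
  ⟨hyx.1.trans hzy.1, hzy.2.trans hyx.2⟩

theorem antisymm (hyx : ScottLE pol y x) (hxy : ScottLE pol x y) : x = y := by
  rw [← posPart_union_negPart pol x, ← posPart_union_negPart pol y,
    hyx.2.antisymm hxy.2, hyx.1.antisymm hxy.1]

end ScottLE

theorem scott_order_is_partial_order
    {E : Type} (ES : EventStructure E) (pol : E → Bool) :
    (∀ x, IsConfig ES x → ScottLE pol x x) ∧
    (∀ x y z, IsConfig ES x → IsConfig ES y → IsConfig ES z →
      ScottLE pol z y → ScottLE pol y x → ScottLE pol z x) ∧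
    (∀ x y, IsConfig ES x → IsConfig ES y →
      ScottLE pol y x → ScottLE pol x y → x = y) :=
  ⟨fun x _ => ScottLE.refl pol x,
    fun _ _ _ _ _ _ hzy hyx => hzy.trans hyx,
    fun _ _ _ _ hyx hxy => hyx.antisymm hxy⟩
end

section
/- A rigid family ℛ (a nonempty set of finite partial orders, down-closed under rigid inclusion) that is coherent determines an event structure Pr(ℛ) whose events are the elements of ℛ possessing a top element, with causal dependency given by rigid inclusion and conflict by incompatibility; and the poset of finite configurations of Pr(ℛ), ordered by inclusion, is order-isomorphic to (ℛ, ↪) via q ↦ {p ∈ Pr(ℛ) : p ↪ q}. -/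
/-- A finite partial order on a subset of a universe `U` (a finite computation path). -/
structure FinPO (U : Type) where
  carrier : Set U
  finite : carrier.Finite
  le : U → U → Prop
  le_mem : ∀ a b, le a b → a ∈ carrier ∧ b ∈ carrier
  le_refl : ∀ a ∈ carrier, le a a
  le_trans : ∀ a b c, le a b → le b c → le a c
  le_antisymm : ∀ a b, le a b → le b a → a = b

/-- Rigid inclusion of finite partial orders `p ↪ q`. -/
def RigidIncl {U : Type} (p q : FinPO U) : Prop :=
  p.carrier ⊆ q.carrier ∧
  (∀ a ∈ p.carrier, ∀ b ∈ p.carrier, (p.le a b ↔ q.le a b)) ∧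
  (∀ a b, q.le a b → b ∈ p.carrier → a ∈ p.carrier)

/-- `p` has a top element. -/
def HasTop {U : Type} (p : FinPO U) : Prop :=
  ∃ t ∈ p.carrier, ∀ a ∈ p.carrier, p.le a t

/-- A rigid family: nonempty and down-closed under rigid inclusion. -/
def IsRigidFamily {U : Type} (R : Set (FinPO U)) : Prop :=
  R.Nonempty ∧ ∀ p q, RigidIncl p q → q ∈ R → p ∈ R

/-- Coherence: every pairwise-compatible finite subfamily has an upper bound in `R`. -/
def Coherent {U : Type} (R : Set (FinPO U)) : Prop :=
  ∀ F : Set (FinPO U), F ⊆ R → F.Finite →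
    (∀ p ∈ F, ∀ q ∈ F, ∃ r ∈ R, RigidIncl p r ∧ RigidIncl q r) →
    ∃ r ∈ R, ∀ p ∈ F, RigidIncl p r

section Aux

variable {U : Type}

lemma FinPO.ext' {p q : FinPO U} (hc : p.carrier = q.carrier) (hl : p.le = q.le) :
    p = q := by
  cases p; cases q; simp_all

lemma riRefl (p : FinPO U) : RigidIncl p p :=
  ⟨subset_rfl, fun _ _ _ _ => Iff.rfl, fun a b hab _ => (p.le_mem a b hab).1⟩

lemma riTrans {p q r : FinPO U} (h1 : RigidIncl p q) (h2 : RigidIncl q r) :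
    RigidIncl p r := by
  obtain ⟨s1, o1, d1⟩ := h1
  obtain ⟨s2, o2, d2⟩ := h2
  refine ⟨s1.trans s2, fun a ha b hb => (o1 a ha b hb).trans (o2 a (s1 ha) b (s1 hb)),
    fun a b hab hb => ?_⟩
  have hbq := s1 hb
  have haq := d2 a b hab hbq
  exact d1 a b ((o2 a haq b hbq).mpr hab) hb

lemma riAntisymm {p q : FinPO U} (h1 : RigidIncl p q) (h2 : RigidIncl q p) : p = q := by
  have hc : p.carrier = q.carrier := subset_antisymm h1.1 h2.1
  refine FinPO.ext' hc ?_
  funext a b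
  apply propext
  constructor
  · intro h
    obtain ⟨ha, hb⟩ := p.le_mem a b h
    exact (h1.2.1 a ha b hb).mp h
  · intro h
    obtain ⟨ha, hb⟩ := q.le_mem a b h
    exact (h1.2.1 a (hc ▸ ha) b (hc ▸ hb)).mpr h

/-- A rigid sub-path is determined by its top element. -/
lemma uniqueTop {p p' q : FinPO U} (h : RigidIncl p q) (h' : RigidIncl p' q)
    {t : U} (ht : t ∈ p.carrier) (htop : ∀ a ∈ p.carrier, p.le a t)
    (ht' : t ∈ p'.carrier) (htop' : ∀ a ∈ p'.carrier, p'.le a t) : p = p' := by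
  have key : ∀ {r r' : FinPO U}, RigidIncl r q → RigidIncl r' q →
      t ∈ r.carrier → (∀ a ∈ r.carrier, r.le a t) → t ∈ r'.carrier →
      r.carrier ⊆ r'.carrier := by
    intro r r' hr hr' htr htopr htr' a ha
    have : q.le a t := (hr.2.1 a ha t htr).mp (htopr a ha)
    exact hr'.2.2 a t this htr'
  have hc : p.carrier = p'.carrier :=
    subset_antisymm (key h h' ht htop ht') (key h' h ht' htop' ht)
  refine FinPO.ext' hc ?_
  funext a b
  apply propext
  constructor
  · intro hab
    obtain ⟨ha, hb⟩ := p.le_mem a b hab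
    exact (h'.2.1 a (hc ▸ ha) b (hc ▸ hb)).mpr ((h.2.1 a ha b hb).mp hab)
  · intro hab
    obtain ⟨ha, hb⟩ := p'.le_mem a b hab
    exact (h.2.1 a (hc ▸ ha) b (hc ▸ hb)).mpr ((h'.2.1 a ha b hb).mp hab)

/-- The principal down-set of `t` in `q`, as a finite partial order. -/
def downPO (q : FinPO U) (t : U) : FinPO U where
  carrier := {a | q.le a t}
  finite := q.finite.subset (fun a ha => (q.le_mem a t ha).1)
  le a b := q.le a b ∧ q.le b t
  le_mem a b h := ⟨q.le_trans a b t h.1 h.2, h.2⟩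
  le_refl a ha := ⟨q.le_refl a (q.le_mem a t ha).1, ha⟩
  le_trans a b c h1 h2 := ⟨q.le_trans a b c h1.1 h2.1, h2.2⟩
  le_antisymm a b h1 h2 := q.le_antisymm a b h1.1 h2.1

lemma downPO_incl (q : FinPO U) {t : U} (_ht : t ∈ q.carrier) :
    RigidIncl (downPO q t) q := by
  refine ⟨fun a ha => (q.le_mem a t ha).1, fun a ha b hb => ?_, fun a b hab hb => ?_⟩
  · exact ⟨fun h => h.1, fun h => ⟨h, hb⟩⟩
  · exact q.le_trans a b t hab hb

lemma downPO_top (q : FinPO U) {t : U} (ht : t ∈ q.carrier) : HasTop (downPO q t) := by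
  refine ⟨t, q.le_refl t ht, fun a ha => ⟨ha, q.le_refl t ht⟩⟩

lemma downPO_mem_carrier (q : FinPO U) {t : U} (ht : t ∈ q.carrier) :
    t ∈ (downPO q t).carrier := q.le_refl t ht

end Aux

theorem rigid_family_determines_event_structure
    {U : Type} (R : Set (FinPO U))
    (hR : IsRigidFamily R) (hcoh : Coherent R) :
    ∃ ES : EventStructure {p : FinPO U // p ∈ R ∧ HasTop p},
      (∀ p q, ES.le p q ↔ RigidIncl p.1 q.1) ∧
      (∀ p q, ES.conflict p q ↔
        ¬ ∃ r ∈ R, RigidIncl p.1 r ∧ RigidIncl q.1 r) ∧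
      (∀ q ∈ R, IsConfig ES {p | RigidIncl p.1 q} ∧
        Set.Finite {p : {p : FinPO U // p ∈ R ∧ HasTop p} | RigidIncl p.1 q}) ∧
      (∀ q ∈ R, ∀ q' ∈ R, (RigidIncl q q' ↔
        {p : {p : FinPO U // p ∈ R ∧ HasTop p} | RigidIncl p.1 q} ⊆
          {p | RigidIncl p.1 q'})) ∧
      (∀ x : Set {p : FinPO U // p ∈ R ∧ HasTop p},
        IsConfig ES x → x.Finite →
          ∃ q ∈ R, {p | RigidIncl p.1 q} = x) := by
  classical
  set E := {p : FinPO U // p ∈ R ∧ HasTop p} with hE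
  -- a choice of top element for each event
  have topSpec : ∀ p : E, ∃ t ∈ p.1.carrier, ∀ a ∈ p.1.carrier, p.1.le a t :=
    fun p => p.2.2
  let topOf : E → U := fun p => (topSpec p).choose
  have topOf_mem : ∀ p : E, topOf p ∈ p.1.carrier := fun p => (topSpec p).choose_spec.1
  have topOf_top : ∀ p : E, ∀ a ∈ p.1.carrier, p.1.le a (topOf p) :=
    fun p => (topSpec p).choose_spec.2
  -- key finiteness fact
  have finSub : ∀ q : FinPO U, Set.Finite {p : E | RigidIncl p.1 q} := by
    intro q
    apply Set.Finite.of_finite_image (f := topOf)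
    · apply q.finite.subset
      rintro t ⟨p, hp, rfl⟩
      exact hp.1 (topOf_mem p)
    · intro p hp p' hp' htop
      apply Subtype.ext
      exact uniqueTop hp hp' (topOf_mem p) (topOf_top p) (htop ▸ topOf_mem p')
        (htop ▸ topOf_top p')
  let ES : EventStructure E :=
    { le := fun p q => RigidIncl p.1 q.1
      conflict := fun p q => ¬ ∃ r ∈ R, RigidIncl p.1 r ∧ RigidIncl q.1 r
      le_refl := fun p => riRefl p.1
      le_trans := fun h1 h2 => riTrans h1 h2
      le_antisymm := fun h1 h2 => Subtype.ext (riAntisymm h1 h2)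
      finite_causes := fun e => finSub e.1
      conflict_irrefl := fun e h => h ⟨e.1, e.2.1, riRefl e.1, riRefl e.1⟩
      conflict_symm := fun h ⟨r, hr, h1, h2⟩ => h ⟨r, hr, h2, h1⟩
      conflict_le := fun {a b c} h hbc ⟨r, hr, h1, h2⟩ =>
        h ⟨r, hr, h1, riTrans hbc h2⟩ }
  refine ⟨ES, fun p q => Iff.rfl, fun p q => Iff.rfl, ?_, ?_, ?_⟩
  · -- configurations from members of R
    intro q hq
    refine ⟨⟨?_, ?_⟩, finSub q⟩
    · intro e he e' he' hc
      exact hc ⟨q, hq, he, he'⟩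
    · intro e he e' hle
      exact riTrans hle he
  · -- order isomorphism
    intro q hq q' hq'
    constructor
    · intro h p hp
      exact riTrans hp h
    · intro h
      -- events from principal down-sets of q
      have hev : ∀ a ∈ q.carrier, RigidIncl (downPO q a) q' := by
        intro a ha
        have hinc := downPO_incl q ha
        have hmem : downPO q a ∈ R := hR.2 _ _ hinc hq
        exact h (show RigidIncl (⟨downPO q a, hmem, downPO_top q ha⟩ : E).1 q from hinc)
      refine ⟨?_, ?_, ?_⟩
      · intro a ha
        exact (hev a ha).1 (downPO_mem_carrier q ha)
      · intro a ha b hb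
        constructor
        · intro hab
          have hmem : a ∈ (downPO q b).carrier := hab
          have := ((hev b hb).2.1 a hmem b (downPO_mem_carrier q hb)).mp
            ⟨hab, q.le_refl b hb⟩
          exact this
        · intro hab
          exact (hev b hb).2.2 a b hab (downPO_mem_carrier q hb)
      · intro a b hab hb
        have ha : a ∈ (downPO q b).carrier :=
          (hev b hb).2.2 a b hab (downPO_mem_carrier q hb)
        exact (q.le_mem a b ha).1
  · -- finite configurations come from R
    intro x hx hfin
    obtain ⟨r, hrR, hr⟩ := hcoh ((fun p : E => p.1) '' x)
      (by rintro _ ⟨p, hp, rfl⟩; exact p.2.1)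
      (hfin.image _)
      (by
        rintro _ ⟨p, hp, rfl⟩ _ ⟨p', hp', rfl⟩
        by_contra hcon
        exact hx.1 p hp p' hp' (by show ¬ ∃ r ∈ R, RigidIncl p.1 r ∧ RigidIncl p'.1 r; push_neg at hcon ⊢; exact fun r hr h1 h2 => hcon r hr h1 h2))
    have hrx : ∀ p ∈ x, RigidIncl (p : E).1 r := fun p hp => hr _ ⟨p, hp, rfl⟩
    -- the union of carriers, as a sub-path of r
    let C : Set U := ⋃ p ∈ x, (p : E).1.carrier
    have hCr : C ⊆ r.carrier := by
      intro a ha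
      simp only [C, Set.mem_iUnion] at ha
      obtain ⟨p, hp, hap⟩ := ha
      exact (hrx p hp).1 hap
    have hCdown : ∀ a b, r.le a b → b ∈ C → a ∈ C := by
      intro a b hab hb
      simp only [C, Set.mem_iUnion] at hb ⊢
      obtain ⟨p, hp, hbp⟩ := hb
      exact ⟨p, hp, (hrx p hp).2.2 a b hab hbp⟩
    let Q : FinPO U :=
      { carrier := C
        finite := Set.Finite.biUnion hfin (fun p _ => p.1.finite)
        le := fun a b => a ∈ C ∧ b ∈ C ∧ r.le a b
        le_mem := fun a b h => ⟨h.1, h.2.1⟩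
        le_refl := fun a ha => ⟨ha, ha, r.le_refl a (hCr ha)⟩
        le_trans := fun a b c h1 h2 => ⟨h1.1, h2.2.1, r.le_trans a b c h1.2.2 h2.2.2⟩
        le_antisymm := fun a b h1 h2 => r.le_antisymm a b h1.2.2 h2.2.2 }
    have hQr : RigidIncl Q r := by
      refine ⟨hCr, fun a ha b hb => ⟨fun h => h.2.2, fun h => ⟨ha, hb, h⟩⟩,
        fun a b hab hb => hCdown a b hab hb⟩
    have hQR : Q ∈ R := hR.2 _ _ hQr hrR
    have hsub : ∀ p ∈ x, (p : E).1.carrier ⊆ C := by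
      intro p hp a ha
      simp only [C, Set.mem_iUnion]
      exact ⟨p, hp, ha⟩
    have hxQ : ∀ p ∈ x, RigidIncl (p : E).1 Q := by
      intro p hp
      have hpr := hrx p hp
      refine ⟨hsub p hp, fun a ha b hb => ?_, fun a b hab hb => ?_⟩
      · constructor
        · intro hle
          exact ⟨hsub p hp ha, hsub p hp hb, (hpr.2.1 a ha b hb).mp hle⟩
        · intro hle
          exact (hpr.2.1 a ha b hb).mpr hle.2.2
      · exact hpr.2.2 a b hab.2.2 hb
    refine ⟨Q, hQR, ?_⟩
    apply subset_antisymm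
    · -- any event included in Q is in x
      intro p' hp'
      have hp'Q : RigidIncl (p' : E).1 Q := hp'
      set t := topOf p'
      have htC : t ∈ C := hp'Q.1 (topOf_mem p')
      simp only [C, Set.mem_iUnion] at htC
      obtain ⟨p, hp, htp⟩ := htC
      -- the principal down-set of t in p.1 is an event below p, hence in x
      have hdincl : RigidIncl (downPO p.1 t) p.1 := downPO_incl p.1 htp
      have hdR : downPO p.1 t ∈ R := hR.2 _ _ hdincl p.2.1
      let et : E := ⟨downPO p.1 t, hdR, downPO_top p.1 htp⟩
      have hetx : et ∈ x := hx.2 p hp et hdincl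
      -- p' equals et, since both are rigid sub-paths of Q with top t
      have hetQ : RigidIncl et.1 Q := riTrans hdincl (hxQ p hp)
      have : (p' : E).1 = et.1 := by
        refine uniqueTop hp'Q hetQ (topOf_mem p') (topOf_top p') ?_ ?_
        · exact downPO_mem_carrier p.1 htp
        · intro a ha
          exact ⟨ha, p.1.le_refl t htp⟩
      have : p' = et := Subtype.ext this
      rw [this]; exact hetx
    · intro p hp
      exact hxQ p hp
end

section
/- For the copycat event structure CC_A on a game A, the relation generated by the causal dependency of A⊥ ∥ A together with the extra pairs c̄ ≤ c for every positive event c of A⊥ ∥ A is a partial order, and every principal down-set in this order is finite. -/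
/-- Polarity on `A⊥ ∥ A`: reversed on the left component. -/
def ccPol {E : Type} (pol : E → Bool) : E ⊕ E → Bool
  | .inl e => !pol e
  | .inr e => pol e

/-- The corresponding event in the other component. -/
def ccBar {E : Type} : E ⊕ E → E ⊕ E
  | .inl e => .inr e
  | .inr e => .inl e

/-- Causal dependency of the juxtaposition `A⊥ ∥ A`. -/
def parLE {E : Type} (ES : EventStructure E) : E ⊕ E → E ⊕ E → Prop
  | .inl a, .inl b => ES.le a b
  | .inr a, .inr b => ES.le a b
  | _, _ => False

/-- Conflict of the juxtaposition `A⊥ ∥ A`: only within components. -/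
def parConflict {E : Type} (ES : EventStructure E) : E ⊕ E → E ⊕ E → Prop
  | .inl a, .inl b => ES.conflict a b
  | .inr a, .inr b => ES.conflict a b
  | _, _ => False

/-- Causal dependency of the copycat event structure: generated by that of
`A⊥ ∥ A` together with `c̄ ≤ c` for every positive `c`. -/
def ccLE {E : Type} (ES : EventStructure E) (pol : E → Bool) : E ⊕ E → E ⊕ E → Prop :=
  Relation.ReflTransGen
    (fun x y => parLE ES x y ∨ (ccPol pol y = true ∧ x = ccBar y))

/-!
Compare events of `A⊥ ∥ A` lexicographically by their underlying event of `A` and then by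
polarity, with `-` below `+`. Each generating pair is increasing for this comparison: a step of
`A⊥ ∥ A` stays inside one component, and `c̄ ≤ c` keeps the underlying event while going from a
negative to a positive event. As an event is determined by its underlying event and its polarity,
the comparison is antisymmetric, hence so is the copycat order; and the causes of an event lie
over the causes of its underlying event, each of which has just two copies.
-/

section Copycat

variable {E : Type}

def ccProj : E ⊕ E → E
  | .inl e => e
  | .inr e => e

lemma ccProj_ccBar (c : E ⊕ E) : ccProj (ccBar c) = ccProj c := by
  cases c <;> rfl

lemma ccPol_ccBar (pol : E → Bool) (c : E ⊕ E) : ccPol pol (ccBar c) = !ccPol pol c := by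
  cases c <;> simp [ccBar, ccPol]

lemma eq_of_ccProj_eq_of_ccPol_eq {pol : E → Bool} {x y : E ⊕ E}
    (hproj : ccProj x = ccProj y) (hpol : ccPol pol x = ccPol pol y) : x = y := by
  cases x <;> cases y <;> simp_all [ccProj, ccPol]

lemma Set.Finite.preimage_ccProj {s : Set E} (hs : s.Finite) : (ccProj ⁻¹' s).Finite :=
  Set.finite_preimage_inl_and_inr.mp ⟨hs, hs⟩

variable (ES : EventStructure E) (pol : E → Bool)

lemma parLE_ccProj {x y : E ⊕ E} (h : parLE ES x y) :
    ES.le (ccProj x) (ccProj y) ∧ (ccProj x = ccProj y → x = y) := by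
  cases x <;> cases y <;> simp_all [parLE, ccProj]

def ccLexLE (x y : E ⊕ E) : Prop :=
  ES.le (ccProj x) (ccProj y) ∧ (ccProj x = ccProj y → ccPol pol x ≤ ccPol pol y)

variable {ES pol}

lemma ccLexLE_trans {x y z : E ⊕ E} (hxy : ccLexLE ES pol x y) (hyz : ccLexLE ES pol y z) :
    ccLexLE ES pol x z := by
  refine ⟨ES.le_trans hxy.1 hyz.1, fun hxz => ?_⟩
  have hxy' : ccProj x = ccProj y := ES.le_antisymm hxy.1 (hxz ▸ hyz.1)
  exact (hxy.2 hxy').trans (hyz.2 (hxy' ▸ hxz))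

lemma ccLexLE_antisymm {x y : E ⊕ E} (hxy : ccLexLE ES pol x y) (hyx : ccLexLE ES pol y x) :
    x = y :=
  have hproj := ES.le_antisymm hxy.1 hyx.1
  eq_of_ccProj_eq_of_ccPol_eq hproj ((hxy.2 hproj).antisymm (hyx.2 hproj.symm))

lemma ccLexLE_of_step {x y : E ⊕ E}
    (h : parLE ES x y ∨ (ccPol pol y = true ∧ x = ccBar y)) : ccLexLE ES pol x y := by
  rcases h with hpar | ⟨hpos, rfl⟩
  · obtain ⟨hle, heq⟩ := parLE_ccProj ES hpar
    exact ⟨hle, fun hproj => heq hproj ▸ le_rfl⟩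
  · refine ⟨ccProj_ccBar y ▸ ES.le_refl _, fun _ => ?_⟩
    simp [ccPol_ccBar, hpos]

lemma ccLexLE_of_ccLE {x y : E ⊕ E} (h : ccLE ES pol x y) : ccLexLE ES pol x y := by
  induction h with
  | refl => exact ⟨ES.le_refl _, fun _ => le_rfl⟩
  | tail _ step ih => exact ccLexLE_trans ih (ccLexLE_of_step step)

end Copycat

theorem copycat_order_is_partial_order_with_finite_causes
    {E : Type} (ES : EventStructure E) (pol : E → Bool) :
    (∀ a b : E ⊕ E, ccLE ES pol a b → ccLE ES pol b a → a = b) ∧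
    (∀ e : E ⊕ E, Set.Finite {e' | ccLE ES pol e' e}) :=
  ⟨fun _ _ hab hba => ccLexLE_antisymm (ccLexLE_of_ccLE hab) (ccLexLE_of_ccLE hba),
    fun e => (ES.finite_causes (ccProj e)).preimage_ccProj.subset
      fun _ he' => (ccLexLE_of_ccLE he').1⟩
end

section
/- A configuration x of the copycat event structure CC_A, written as x = x₁ ∥ x₂ with x₁ a configuration of A⊥ and x₂ of A, is +-maximal (no positive event is enabled at x) if and only if x₁ = x₂ as subsets of |A|, provided A is race-free. -/
/-- Conflict of the copycat event structure: events whose (new) down-closures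
contain originally conflicting events. -/
def ccConflict {E : Type} (ES : EventStructure E) (pol : E → Bool)
    (a b : E ⊕ E) : Prop :=
  ∃ a' b', ccLE ES pol a' a ∧ ccLE ES pol b' b ∧ parConflict ES a' b'

/-- Configurations of the copycat event structure. -/
def IsCCConfig {E : Type} (ES : EventStructure E) (pol : E → Bool)
    (x : Set (E ⊕ E)) : Prop :=
  (∀ a ∈ x, ∀ b ∈ x, ¬ ccConflict ES pol a b) ∧
  (∀ a ∈ x, ∀ b, ccLE ES pol b a → b ∈ x)

/-- Immediate conflict in an event structure. -/
def ImmConflict {E : Type} (ES : EventStructure E) (e e' : E) : Prop :=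
  ES.conflict e e' ∧
  ∀ e1 e1', ES.le e1 e → ES.le e1' e' → ES.conflict e1 e1' → e1 = e ∧ e1' = e'

/-- A game is race-free when no immediate conflict holds between events of
opposite polarity. -/
def RaceFree {E : Type} (ES : EventStructure E) (pol : E → Bool) : Prop :=
  ∀ e e', ImmConflict ES e e' → pol e = pol e'

section CCAux

variable {E : Type}

/-- The partial order induced by an event structure. -/
def esOrder (ES : EventStructure E) : PartialOrder E where
  le := ES.le
  le_refl := ES.le_refl
  le_trans _ _ _ := ES.le_trans
  le_antisymm _ _ := ES.le_antisymm

lemma ccLE_of_parLE {ES : EventStructure E} {pol : E → Bool} {a b : E ⊕ E}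
    (h : parLE ES a b) : ccLE ES pol a b :=
  Relation.ReflTransGen.single (Or.inl h)

lemma ccLE_bar {ES : EventStructure E} {pol : E → Bool} {c : E ⊕ E}
    (h : ccPol pol c = true) : ccLE ES pol (ccBar c) c :=
  Relation.ReflTransGen.single (Or.inr ⟨h, rfl⟩)

lemma ccLE_inr_cases {ES : EventStructure E} {pol : E → Bool} {b : E ⊕ E} {e : E}
    (h : ccLE ES pol b (Sum.inr e)) :
    (∃ b', b = Sum.inr b' ∧ ES.le b' e) ∨
    (∃ u, ES.le u e ∧ ccLE ES pol b (Sum.inl u)) := by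
  have H : ∀ a, ccLE ES pol b a → ∀ e, a = Sum.inr e →
      (∃ b', b = Sum.inr b' ∧ ES.le b' e) ∨
      (∃ u, ES.le u e ∧ ccLE ES pol b (Sum.inl u)) := by
    intro a h
    induction h with
    | refl => intro e he; exact Or.inl ⟨e, he, ES.le_refl e⟩
    | tail h' r ih =>
      rename_i m c
      intro e he
      subst he
      rcases r with hp | ⟨_, hbar⟩
      · cases m with
        | inl u => exact absurd hp (by simp [parLE])
        | inr u =>
          have hu : ES.le u e := hp
          rcases ih u rfl with ⟨b', hb', hle⟩ | ⟨v, hv, hc⟩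
          · exact Or.inl ⟨b', hb', ES.le_trans hle hu⟩
          · exact Or.inr ⟨v, ES.le_trans hv hu, hc⟩
      · have : m = Sum.inl e := hbar
        subst this
        exact Or.inr ⟨e, ES.le_refl e, h'⟩
  exact H _ h e rfl

lemma ccLE_inl_cases {ES : EventStructure E} {pol : E → Bool} {b : E ⊕ E} {e : E}
    (h : ccLE ES pol b (Sum.inl e)) :
    (∃ b', b = Sum.inl b' ∧ ES.le b' e) ∨
    (∃ u, ES.le u e ∧ ccLE ES pol b (Sum.inr u)) := by
  have H : ∀ a, ccLE ES pol b a → ∀ e, a = Sum.inl e →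
      (∃ b', b = Sum.inl b' ∧ ES.le b' e) ∨
      (∃ u, ES.le u e ∧ ccLE ES pol b (Sum.inr u)) := by
    intro a h
    induction h with
    | refl => intro e he; exact Or.inl ⟨e, he, ES.le_refl e⟩
    | tail h' r ih =>
      rename_i m c
      intro e he
      subst he
      rcases r with hp | ⟨_, hbar⟩
      · cases m with
        | inr u => exact absurd hp (by simp [parLE])
        | inl u =>
          have hu : ES.le u e := hp
          rcases ih u rfl with ⟨b', hb', hle⟩ | ⟨v, hv, hc⟩
          · exact Or.inl ⟨b', hb', ES.le_trans hle hu⟩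
          · exact Or.inr ⟨v, ES.le_trans hv hu, hc⟩
      · have : m = Sum.inr e := hbar
        subst this
        exact Or.inr ⟨e, ES.le_refl e, h'⟩
  exact H _ h e rfl

/-- Extract an immediate conflict below a conflicting pair. -/
lemma exists_immConflict {ES : EventStructure E} {e w : E}
    (h : ES.conflict e w) :
    ∃ e1 e1', ES.le e1 e ∧ ES.le e1' w ∧ ImmConflict ES e1 e1' := by
  letI : PartialOrder E := esOrder ES
  set S : Set (E × E) :=
    {p : E × E | ES.le p.1 e ∧ ES.le p.2 w ∧ ES.conflict p.1 p.2} with hS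
  have hfin : S.Finite := by
    apply Set.Finite.subset (Set.Finite.prod (ES.finite_causes e) (ES.finite_causes w))
    rintro ⟨a, b⟩ ⟨ha, hb, _⟩
    exact ⟨ha, hb⟩
  have hne : S.Nonempty := ⟨(e, w), ES.le_refl e, ES.le_refl w, h⟩
  obtain ⟨p, hp, hmin⟩ : ∃ p ∈ S, ∀ q ∈ S, id q ≤ id p → id p = id q := by
    obtain ⟨p, hp, hm⟩ := hfin.exists_minimalFor id S hne
    exact ⟨p, hp, fun q hq hle => le_antisymm (hm hq hle) hle⟩
  obtain ⟨hp1, hp2, hpc⟩ := hp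
  refine ⟨p.1, p.2, hp1, hp2, hpc, ?_⟩
  intro a b ha hb hab
  have habS : (a, b) ∈ S := ⟨ES.le_trans ha hp1, ES.le_trans hb hp2, hab⟩
  have hle : ((a, b) : E × E) ≤ (p.1, p.2) := ⟨ha, hb⟩
  have heqp := hmin (a, b) habS (by simpa using hle)
  simp only [id] at heqp
  constructor
  · exact (congrArg Prod.fst heqp).symm
  · exact (congrArg Prod.snd heqp).symm

variable {ES : EventStructure E} {pol : E → Bool} {x : Set (E ⊕ E)}

lemma pos_closure_r (hx : IsCCConfig ES pol x) {e : E}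
    (h : Sum.inr e ∈ x) (hp : pol e = true) : Sum.inl e ∈ x :=
  hx.2 _ h _ (ccLE_bar (show ccPol pol (Sum.inr e) = true from hp))

lemma pos_closure_l (hx : IsCCConfig ES pol x) {e : E}
    (h : Sum.inl e ∈ x) (hp : pol e = false) : Sum.inr e ∈ x :=
  hx.2 _ h _ (ccLE_bar (show ccPol pol (Sum.inl e) = true by simp [ccPol, hp]))

/-- Case A: adding `inr e` when `inl e ∈ x`, `inr e ∉ x` for a minimal
element `e` of the symmetric difference. -/
lemma insert_inr_config (hrf : RaceFree ES pol) (hx : IsCCConfig ES pol x)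
    {e : E} (hel : Sum.inl e ∈ x) (her : Sum.inr e ∉ x)
    (hmin : ∀ f, ES.le f e → f ≠ e → (Sum.inl f ∈ x ↔ Sum.inr f ∈ x)) :
    IsCCConfig ES pol (insert (Sum.inr e) x) := by
  have hpe : pol e = true := by
    cases hpe : pol e with
    | false => exact absurd (pos_closure_l hx hel hpe) her
    | true => rfl
  -- down-closure
  have hdc : ∀ a ∈ insert (Sum.inr e) x, ∀ b, ccLE ES pol b a →
      b ∈ insert (Sum.inr e) x := by
    intro a ha b hb
    rcases ha with rfl | ha
    · rcases ccLE_inr_cases hb with ⟨b', rfl, hle⟩ | ⟨u, hu, hblu⟩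
      · by_cases hbe : b' = e
        · subst hbe; exact Set.mem_insert _ _
        · have hlb : Sum.inl b' ∈ x :=
            hx.2 _ hel _ (ccLE_of_parLE (show parLE ES (Sum.inl b') (Sum.inl e) from hle))
          exact Set.mem_insert_of_mem _ ((hmin b' hle hbe).mp hlb)
      · have hlu : Sum.inl u ∈ x :=
          hx.2 _ hel _ (ccLE_of_parLE (show parLE ES (Sum.inl u) (Sum.inl e) from hu))
        exact Set.mem_insert_of_mem _ (hx.2 _ hlu _ hblu)
    · exact Set.mem_insert_of_mem _ (hx.2 _ ha _ hb)
  -- key conflict elimination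
  have key : ∀ v, ES.conflict e v → Sum.inr v ∈ x → False := by
    intro v hcv hvx
    obtain ⟨e1, e1', h1e, h1v, himm⟩ := exists_immConflict hcv
    have h1x : Sum.inl e1 ∈ x :=
      hx.2 _ hel _ (ccLE_of_parLE (show parLE ES (Sum.inl e1) (Sum.inl e) from h1e))
    have h1'x : Sum.inr e1' ∈ x :=
      hx.2 _ hvx _ (ccLE_of_parLE (show parLE ES (Sum.inr e1') (Sum.inr v) from h1v))
    have he1 : e1 = e := by
      by_contra hne
      have h1rx : Sum.inr e1 ∈ x := (hmin e1 h1e hne).mp h1x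
      exact hx.1 _ h1rx _ h1'x
        ⟨Sum.inr e1, Sum.inr e1', Relation.ReflTransGen.refl,
          Relation.ReflTransGen.refl, himm.1⟩
    subst he1
    have hp1' : pol e1' = true := (hrf _ _ himm).symm.trans hpe
    have h1'lx : Sum.inl e1' ∈ x := pos_closure_r hx h1'x hp1'
    exact hx.1 _ hel _ h1'lx
      ⟨Sum.inl e1, Sum.inl e1', Relation.ReflTransGen.refl,
        Relation.ReflTransGen.refl, himm.1⟩
  refine ⟨?_, hdc⟩
  intro a ha b hb hcon
  obtain ⟨a', b', haa, hbb, hpc⟩ := hcon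
  have ha' := hdc a ha a' haa
  have hb' := hdc b hb b' hbb
  cases a' with
  | inl u =>
    cases b' with
    | inl v =>
      have hux : Sum.inl u ∈ x := Set.mem_of_mem_insert_of_ne ha' (by simp)
      have hvx : Sum.inl v ∈ x := Set.mem_of_mem_insert_of_ne hb' (by simp)
      exact hx.1 _ hux _ hvx
        ⟨Sum.inl u, Sum.inl v, Relation.ReflTransGen.refl,
          Relation.ReflTransGen.refl, hpc⟩
    | inr v => exact absurd hpc (by simp [parConflict])
  | inr u =>
    cases b' with
    | inl v => exact absurd hpc (by simp [parConflict])
    | inr v =>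
      have hcuv : ES.conflict u v := hpc
      by_cases hue : u = e
      · subst hue
        by_cases hve : v = u
        · subst hve; exact ES.conflict_irrefl _ hcuv
        · have hvx : Sum.inr v ∈ x := Set.mem_of_mem_insert_of_ne hb' (by simp [hve])
          exact key v hcuv hvx
      · have hux : Sum.inr u ∈ x := Set.mem_of_mem_insert_of_ne ha' (by simp [hue])
        by_cases hve : v = e
        · subst hve; exact key u (ES.conflict_symm hcuv) hux
        · have hvx : Sum.inr v ∈ x := Set.mem_of_mem_insert_of_ne hb' (by simp [hve])
          exact hx.1 _ hux _ hvx
            ⟨Sum.inr u, Sum.inr v, Relation.ReflTransGen.refl,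
              Relation.ReflTransGen.refl, hcuv⟩

/-- Case B: adding `inl e` when `inr e ∈ x`, `inl e ∉ x` for a minimal
element `e` of the symmetric difference. -/
lemma insert_inl_config (hrf : RaceFree ES pol) (hx : IsCCConfig ES pol x)
    {e : E} (her : Sum.inr e ∈ x) (hel : Sum.inl e ∉ x)
    (hmin : ∀ f, ES.le f e → f ≠ e → (Sum.inl f ∈ x ↔ Sum.inr f ∈ x)) :
    IsCCConfig ES pol (insert (Sum.inl e) x) := by
  have hpe : pol e = false := by
    cases hpe : pol e with
    | true => exact absurd (pos_closure_r hx her hpe) hel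
    | false => rfl
  have hdc : ∀ a ∈ insert (Sum.inl e) x, ∀ b, ccLE ES pol b a →
      b ∈ insert (Sum.inl e) x := by
    intro a ha b hb
    rcases ha with rfl | ha
    · rcases ccLE_inl_cases hb with ⟨b', rfl, hle⟩ | ⟨u, hu, hblu⟩
      · by_cases hbe : b' = e
        · subst hbe; exact Set.mem_insert _ _
        · have hlb : Sum.inr b' ∈ x :=
            hx.2 _ her _ (ccLE_of_parLE (show parLE ES (Sum.inr b') (Sum.inr e) from hle))
          exact Set.mem_insert_of_mem _ ((hmin b' hle hbe).mpr hlb)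
      · have hlu : Sum.inr u ∈ x :=
          hx.2 _ her _ (ccLE_of_parLE (show parLE ES (Sum.inr u) (Sum.inr e) from hu))
        exact Set.mem_insert_of_mem _ (hx.2 _ hlu _ hblu)
    · exact Set.mem_insert_of_mem _ (hx.2 _ ha _ hb)
  have key : ∀ v, ES.conflict e v → Sum.inl v ∈ x → False := by
    intro v hcv hvx
    obtain ⟨e1, e1', h1e, h1v, himm⟩ := exists_immConflict hcv
    have h1x : Sum.inr e1 ∈ x :=
      hx.2 _ her _ (ccLE_of_parLE (show parLE ES (Sum.inr e1) (Sum.inr e) from h1e))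
    have h1'x : Sum.inl e1' ∈ x :=
      hx.2 _ hvx _ (ccLE_of_parLE (show parLE ES (Sum.inl e1') (Sum.inl v) from h1v))
    have he1 : e1 = e := by
      by_contra hne
      have h1lx : Sum.inl e1 ∈ x := (hmin e1 h1e hne).mpr h1x
      exact hx.1 _ h1lx _ h1'x
        ⟨Sum.inl e1, Sum.inl e1', Relation.ReflTransGen.refl,
          Relation.ReflTransGen.refl, himm.1⟩
    subst he1
    have hp1' : pol e1' = false := (hrf _ _ himm).symm.trans hpe
    have h1'rx : Sum.inr e1' ∈ x := pos_closure_l hx h1'x hp1'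
    exact hx.1 _ her _ h1'rx
      ⟨Sum.inr e1, Sum.inr e1', Relation.ReflTransGen.refl,
        Relation.ReflTransGen.refl, himm.1⟩
  refine ⟨?_, hdc⟩
  intro a ha b hb hcon
  obtain ⟨a', b', haa, hbb, hpc⟩ := hcon
  have ha' := hdc a ha a' haa
  have hb' := hdc b hb b' hbb
  cases a' with
  | inr u =>
    cases b' with
    | inr v =>
      have hux : Sum.inr u ∈ x := Set.mem_of_mem_insert_of_ne ha' (by simp)
      have hvx : Sum.inr v ∈ x := Set.mem_of_mem_insert_of_ne hb' (by simp)
      exact hx.1 _ hux _ hvx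
        ⟨Sum.inr u, Sum.inr v, Relation.ReflTransGen.refl,
          Relation.ReflTransGen.refl, hpc⟩
    | inl v => exact absurd hpc (by simp [parConflict])
  | inl u =>
    cases b' with
    | inr v => exact absurd hpc (by simp [parConflict])
    | inl v =>
      have hcuv : ES.conflict u v := hpc
      by_cases hue : u = e
      · subst hue
        by_cases hve : v = u
        · subst hve; exact ES.conflict_irrefl _ hcuv
        · have hvx : Sum.inl v ∈ x := Set.mem_of_mem_insert_of_ne hb' (by simp [hve])
          exact key v hcuv hvx
      · have hux : Sum.inl u ∈ x := Set.mem_of_mem_insert_of_ne ha' (by simp [hue])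
        by_cases hve : v = e
        · subst hve; exact key u (ES.conflict_symm hcuv) hux
        · have hvx : Sum.inl v ∈ x := Set.mem_of_mem_insert_of_ne hb' (by simp [hve])
          exact hx.1 _ hux _ hvx
            ⟨Sum.inl u, Sum.inl v, Relation.ReflTransGen.refl,
              Relation.ReflTransGen.refl, hcuv⟩

end CCAux

theorem copycat_plus_maximal_iff_equal_components
    {E : Type} (ES : EventStructure E) (pol : E → Bool)
    (hrf : RaceFree ES pol)
    (x : Set (E ⊕ E)) (hx : IsCCConfig ES pol x) :
    (∀ c ∉ x, IsCCConfig ES pol (insert c x) → ccPol pol c = false) ↔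
      {e : E | Sum.inl e ∈ x} = {e : E | Sum.inr e ∈ x} := by
  constructor
  · intro hmax
    by_contra hne
    have hdif : ∃ e0, ¬ (Sum.inl e0 ∈ x ↔ Sum.inr e0 ∈ x) := by
      by_contra h
      push_neg at h
      exact hne (Set.ext fun e => h e)
    obtain ⟨e0, he0⟩ := hdif
    letI : PartialOrder E := esOrder ES
    set S : Set E := {f | ES.le f e0 ∧ ¬ (Sum.inl f ∈ x ↔ Sum.inr f ∈ x)} with hSdef
    have hfin : S.Finite :=
      Set.Finite.subset (ES.finite_causes e0) (fun f hf => hf.1)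
    have hSne : S.Nonempty := ⟨e0, ES.le_refl e0, he0⟩
    obtain ⟨m, hmS, hmmin⟩ : ∃ m ∈ S, ∀ q ∈ S, id q ≤ id m → id m = id q := by
      obtain ⟨m, hm, hm'⟩ := hfin.exists_minimalFor id S hSne
      exact ⟨m, hm, fun q hq hle => le_antisymm (hm' hq hle) hle⟩
    have hmin : ∀ f, ES.le f m → f ≠ m → (Sum.inl f ∈ x ↔ Sum.inr f ∈ x) := by
      intro f hfm hfne
      by_contra hko
      have hfS : f ∈ S := ⟨ES.le_trans hfm hmS.1, hko⟩
      exact hfne (hmmin f hfS hfm).symm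
    by_cases hl : Sum.inl m ∈ x
    · have hr : Sum.inr m ∉ x := fun hr => hmS.2 ⟨fun _ => hr, fun _ => hl⟩
      have hcfg := insert_inr_config hrf hx hl hr hmin
      have hpol := hmax (Sum.inr m) hr hcfg
      have hpm : pol m = false := hpol
      exact hr (pos_closure_l hx hl hpm)
    · have hr : Sum.inr m ∈ x := by
        by_contra hr
        exact hmS.2 ⟨fun h => absurd h hl, fun h => absurd h hr⟩
      have hcfg := insert_inl_config hrf hx hr hl hmin
      have hpol := hmax (Sum.inl m) hl hcfg
      have hpm : pol m = true := by
        have : (!pol m) = false := hpol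
        simpa using this
      exact hl (pos_closure_r hx hr hpm)
  · intro heq c hc hcfg
    by_contra hpos
    have hpos' : ccPol pol c = true := by
      cases h : ccPol pol c
      · exact absurd h hpos
      · rfl
    have hbar : ccBar c ∈ insert c x :=
      hcfg.2 c (Set.mem_insert _ _) _ (ccLE_bar hpos')
    have hbarne : ccBar c ≠ c := by
      cases c <;> simp [ccBar]
    have hbarx : ccBar c ∈ x := by
      rcases hbar with h | h
      · exact absurd h hbarne
      · exact h
    have hcx : c ∈ x := by
      cases c with
      | inl e =>
        have : Sum.inr e ∈ x := hbarx
        have : e ∈ {e : E | Sum.inr e ∈ x} := this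
        rw [← heq] at this
        exact this
      | inr e =>
        have : Sum.inl e ∈ x := hbarx
        have : e ∈ {e : E | Sum.inl e ∈ x} := this
        rw [heq] at this
        exact this
    exact hc hcx
end

section
/- If a total map of event structures f : E → E' is rigid, injective on events, and both injective and surjective on configurations (every configuration of E' is the image of a configuration of E and distinct configurations have distinct images), then f is an isomorphism of event structures. -/
/-!
The down-closure of an event is a configuration, so surjectivity on configurations forces
surjectivity on events; hence `f` is a bijection. Its inverse sends a configuration `f '' x`
back to `x`, so it is again a map of event structures.
-/

namespace EventStructure

variable {E : Type} (ES : EventStructure E)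

theorem isConfig_setOf_le (e : E) : IsConfig ES {a | ES.le a e} := by
  refine ⟨fun a ha b hb hab => ?_, fun a ha b hba => ES.le_trans hba ha⟩
  exact ES.conflict_irrefl e
    (ES.conflict_le (ES.conflict_symm (ES.conflict_le hab hb)) ha)

end EventStructure

theorem surjective_of_forall_isConfig_image {E E' : Type} (ES' : EventStructure E')
    {f : E → E'} (hsurj : ∀ y, IsConfig ES' y → ∃ x : Set E, f '' x = y) :
    Function.Surjective f := by
  intro e
  obtain ⟨x, hx⟩ := hsurj _ (ES'.isConfig_setOf_le e)
  have he : e ∈ f '' x := hx ▸ ES'.le_refl e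
  obtain ⟨a, -, rfl⟩ := he
  exact ⟨a, rfl⟩

theorem isMapES_of_injective {E E' : Type} (ES : EventStructure E) (ES' : EventStructure E')
    {f : E → E'} (hinj : Function.Injective f)
    (hconfig : ∀ x, IsConfig ES x → IsConfig ES' (f '' x)) : IsMapES ES ES' f :=
  ⟨hconfig, fun _ _ _ _ _ _ h => hinj h⟩

theorem rigid_config_bijective_is_iso_general
    {E E' : Type} (ES : EventStructure E) (ES' : EventStructure E')
    (f : E → E')
    (hinj : Function.Injective f)
    (hsurj : ∀ y, IsConfig ES' y → ∃ x, IsConfig ES x ∧ f '' x = y) :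
    ∃ g : E' → E, IsMapES ES' ES g ∧
      Function.LeftInverse g f ∧ Function.RightInverse g f := by
  have hsurjE : Function.Surjective f :=
    surjective_of_forall_isConfig_image ES' fun y hy =>
      (hsurj y hy).imp fun _ => And.right
  let eqv := Equiv.ofBijective f ⟨hinj, hsurjE⟩
  refine ⟨eqv.symm, isMapES_of_injective ES' ES eqv.symm.injective ?_,
    eqv.symm_apply_apply, eqv.apply_symm_apply⟩
  intro y hy
  obtain ⟨x, hx, rfl⟩ := hsurj y hy
  rwa [show f '' x = eqv '' x from rfl, eqv.symm_image_image]

theorem rigid_config_bijective_is_iso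
    {E E' : Type} (ES : EventStructure E) (ES' : EventStructure E')
    (f : E → E') (hf : IsMapES ES ES' f)
    (hrigid : RigidMap ES ES' f)
    (hinj : Function.Injective f)
    (hsurj : ∀ y, IsConfig ES' y → ∃ x, IsConfig ES x ∧ f '' x = y)
    (hinjcfg : ∀ x x', IsConfig ES x → IsConfig ES x' → f '' x = f '' x' → x = x') :
    ∃ g : E' → E, IsMapES ES' ES g ∧
      Function.LeftInverse g f ∧ Function.RightInverse g f :=
  rigid_config_bijective_is_iso_general ES ES' f hinj hsurj
end
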